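/- arXiv:2004.13311 — 2 statements merged into one kernel-verified Lean document; each statement's English description precedes it below -/
import Mathlib

section
/- Let x ∈ ℓ¹(ℤ) be a complex-valued summable sequence and define its Fourier series x̂(t) = Σ_{m∈ℤ} x(m) e^{imt} for t ∈ (-π,π). Then for every n ∈ ℤ, the n-th Fourier coefficient of the function t ↦ sgn(t)·x̂(t) satisfies (1/2π) ∫_{-π}^{π} sgn(t)·x̂(t)·e^{-int} dt = 2i·(𝓗_d x)(n), where 𝓗_d is the discrete Hilbert-type transform. -/
open Complex Real MeasureTheory

/-- The discrete Hilbert-type transform: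
`(𝓗_d x)(n) = (1/π) Σ_{m ∈ ℤ, m - n odd} x(m)/(m - n)`. -/
noncomputable def discreteHilbert (x : ℤ → ℂ) (n : ℤ) : ℂ :=
  (1 / (π : ℂ)) * ∑' m : ℤ, if Odd (m - n) then x m / ((m - n : ℤ) : ℂ) else 0

/-! Expanding `x̂` and exchanging sum and integral (legitimate since `x ∈ ℓ¹` and
`|sgn t · e^{ikt}| ≤ 1`) reduces the claim to the coefficients
`∫_{-π}^{π} sgn t · e^{ikt} dt = ∫_0^π (e^{ikt} - e^{-ikt}) dt`, which equal `4i/k` for odd `k`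
and vanish for even `k`. -/

@[fun_prop]
theorem Real.measurable_sign : Measurable Real.sign :=
  Measurable.ite measurableSet_Iio measurable_const
    (Measurable.ite measurableSet_Ioi measurable_const measurable_const)

theorem Real.abs_sign_le_one (t : ℝ) : |Real.sign t| ≤ 1 := by
  rcases Real.sign_apply_eq t with h | h | h <;> simp [h]

theorem norm_sign_mul_exp_I_int_mul_le_one (k : ℤ) (t : ℝ) :
    ‖(Real.sign t : ℂ) * Complex.exp (I * k * t)‖ ≤ 1 := by
  simpa [Complex.norm_exp] using Real.abs_sign_le_one t

theorem Complex.exp_I_int_mul_pi (k : ℤ) : exp (I * k * π) = (-1) ^ k := by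
  rw [show I * k * π = k * (π * I) by ring, exp_int_mul, exp_pi_mul_I]

theorem Complex.exp_I_int_mul_neg_pi (k : ℤ) : exp (I * k * ((-π : ℝ) : ℂ)) = (-1) ^ k := by
  rw [ofReal_neg, mul_neg, exp_neg, exp_I_int_mul_pi, ← zpow_neg]
  rcases Int.even_or_odd k with h | h <;> simp [h.neg_one_zpow, h.neg.neg_one_zpow]

theorem integral_tsum_mul_of_summable_norm {α ι 𝕜 : Type*} [MeasurableSpace α] [Countable ι]
    [RCLike 𝕜] {μ : Measure α} [IsFiniteMeasure μ] {x : ι → 𝕜} (hx : Summable fun m => ‖x m‖)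
    {g : ι → α → 𝕜} {C : ℝ} (hg : ∀ m, AEStronglyMeasurable (g m) μ) (hgC : ∀ m a, ‖g m a‖ ≤ C) :
    ∫ a, ∑' m, x m * g m a ∂μ = ∑' m, x m * ∫ a, g m a ∂μ := by
  have hint : ∀ m, Integrable (g m) μ := fun m =>
    .of_bound (hg m) C (.of_forall (hgC m))
  have hnorm_le : ∀ m, ∫ a, ‖x m * g m a‖ ∂μ ≤ ‖x m‖ * (C * μ.real Set.univ) := fun m => by
    simp only [norm_mul, integral_const_mul]
    refine mul_le_mul_of_nonneg_left ?_ (norm_nonneg _)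
    refine (le_abs_self _).trans ?_
    simpa using norm_integral_le_of_norm_le_const
      (.of_forall fun a => (norm_norm (g m a)).trans_le (hgC m a))
  have hsum : Summable fun m => ∫ a, ‖x m * g m a‖ ∂μ :=
    .of_nonneg_of_le (fun m => integral_nonneg fun a => norm_nonneg _) hnorm_le (hx.mul_right _)
  simp_rw [← integral_const_mul]
  exact (integral_tsum_of_summable_integral_norm (fun m => (hint m).const_mul (x m)) hsum).symm

theorem IntervalIntegrable.ofReal_sign_mul {f : ℝ → ℂ} {a b : ℝ}
    (hf : IntervalIntegrable f volume a b) :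
    IntervalIntegrable (fun t => (Real.sign t : ℂ) * f t) volume a b :=
  intervalIntegrable_iff.mpr <| (intervalIntegrable_iff.mp hf).bdd_mul (c := 1) (by fun_prop)
    (.of_forall fun t => by simpa using Real.abs_sign_le_one t)

theorem intervalIntegral.integral_sign_mul {f : ℝ → ℂ} {a b : ℝ} (ha : a ≤ 0) (hb : 0 ≤ b)
    (hf : IntervalIntegrable f volume a b) :
    ∫ t in a..b, (Real.sign t : ℂ) * f t = (∫ t in 0..b, f t) - ∫ t in a..0, f t := by
  have h0 : (0 : ℝ) ∈ Set.uIcc a b := Set.mem_uIcc_of_le ha hb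
  have hfa : IntervalIntegrable f volume a 0 := hf.mono_set (Set.uIcc_subset_uIcc_left h0)
  have hfb : IntervalIntegrable f volume 0 b := hf.mono_set (Set.uIcc_subset_uIcc_right h0)
  have hneg : ∫ t in a..0, (Real.sign t : ℂ) * f t = -∫ t in a..0, f t := by
    rw [← intervalIntegral.integral_neg]
    refine intervalIntegral.integral_congr_ae ?_
    filter_upwards [Measure.ae_ne volume (0 : ℝ)] with t ht hmem
    rw [Set.uIoc_of_le ha] at hmem
    simp [Real.sign_of_neg (lt_of_le_of_ne hmem.2 ht)]
  have hpos : ∫ t in (0 : ℝ)..b, (Real.sign t : ℂ) * f t = ∫ t in 0..b, f t := by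
    refine intervalIntegral.integral_congr_ae (.of_forall fun t hmem => ?_)
    rw [Set.uIoc_of_le hb] at hmem
    simp [Real.sign_of_pos hmem.1]
  rw [← intervalIntegral.integral_add_adjacent_intervals hfa.ofReal_sign_mul
    hfb.ofReal_sign_mul, hneg, hpos]
  ring

theorem integral_sign_mul_exp_I_int_mul (k : ℤ) :
    ∫ t in (-π)..π, (Real.sign t : ℂ) * Complex.exp (I * k * t) =
      if Odd k then 4 * I / k else 0 := by
  rw [intervalIntegral.integral_sign_mul (by linarith [pi_pos]) pi_pos.le
    (Continuous.intervalIntegrable (by fun_prop) _ _)]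
  rcases eq_or_ne k 0 with rfl | hk
  · simp
  have hIk : I * k ≠ 0 := mul_ne_zero I_ne_zero (Int.cast_ne_zero.mpr hk)
  rw [integral_exp_mul_complex hIk, integral_exp_mul_complex hIk, exp_I_int_mul_pi,
    exp_I_int_mul_neg_pi]
  rcases Int.even_or_odd k with hk' | hk'
  · simp [hk'.neg_one_zpow, Int.not_odd_iff_even.mpr hk']
  · rw [hk'.neg_one_zpow, if_pos hk', ofReal_zero, mul_zero, Complex.exp_zero]
    field_simp
    linear_combination (-4 : ℂ) * I_sq

/-- For `x ∈ ℓ¹(ℤ)` with Fourier series `x̂(t) = Σ_m x(m) e^{imt}`, the `n`-th Fourier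
coefficient of `t ↦ sgn(t)·x̂(t)` equals `2i·(𝓗_d x)(n)`. -/
theorem fourier_coeff_sign_mul_eq_discreteHilbert
    (x : ℤ → ℂ) (hx : Summable fun m : ℤ => ‖x m‖) (n : ℤ) :
    (1 / (2 * (π : ℂ))) *
        ∫ t in (-π)..π,
          (Real.sign t : ℂ) * (∑' m : ℤ, x m * Complex.exp (Complex.I * m * t)) *
            Complex.exp (-(Complex.I * n * t)) =
      2 * Complex.I * discreteHilbert x n := by
  have hpi : -π ≤ π := by linarith [pi_pos]
  have hshift : ∀ t : ℝ,
      (Real.sign t : ℂ) * (∑' m : ℤ, x m * Complex.exp (I * m * t)) *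
          Complex.exp (-(I * n * t)) =
        ∑' m : ℤ, x m * ((Real.sign t : ℂ) * Complex.exp (I * ((m - n : ℤ) : ℂ) * t)) := by
    intro t
    rw [mul_right_comm, ← tsum_mul_left]
    refine tsum_congr fun m => ?_
    have hexp : Complex.exp (I * m * t) * Complex.exp (-(I * n * t)) =
        Complex.exp (I * ((m - n : ℤ) : ℂ) * t) := by
      rw [← Complex.exp_add]; push_cast; ring_nf
    rw [← hexp]
    ring
  have hterm : ∀ m : ℤ, x m * (if Odd (m - n) then 4 * I / ((m - n : ℤ) : ℂ) else 0) =
      4 * I * if Odd (m - n) then x m / ((m - n : ℤ) : ℂ) else 0 := fun m => by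
    split_ifs <;> ring
  simp_rw [hshift, intervalIntegral.integral_of_le hpi]
  rw [integral_tsum_mul_of_summable_norm hx (fun m => by fun_prop)
    (fun m t => norm_sign_mul_exp_I_int_mul_le_one (m - n) t)]
  simp_rw [← intervalIntegral.integral_of_le hpi, integral_sign_mul_exp_I_int_mul, hterm,
    tsum_mul_left, discreteHilbert]
  field_simp
  ring
end

section
/- Let μ : ℕ → [0,∞) be a nonincreasing nonnegative sequence. Then for every n ≥ 0, (1/π) Σ_{m≥0} μ(m)/(2m + 2n + 1) ≥ (1/(8π)) · (S_d μ)(n), where the inequality is understood in [0,∞]. Consequently, if x : ℤ → [0,∞) is defined by x(2k+1) = μ(k) and x = 0 elsewhere, then (𝓗_d x)(−2n) ≥ (1/(8π))·(S_d μ)(n) for all n ≥ 0. -/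
open Real
open scoped ENNReal NNReal

/-- The sequence `x : ℤ → ℝ≥0` with `x(2k+1) = μ(k)` for `k ≥ 0` and `x(m) = 0`
for all other `m`. -/
noncomputable def oddSupported (μ : ℕ → ℝ≥0) (m : ℤ) : ℝ≥0 :=
  if Odd m ∧ 0 < m then μ ((m - 1) / 2).toNat else 0

/-- The discrete Calderón operator:
`(S_d μ)(n) = (1/(n+1)) Σ_{k=0}^{n} μ(k) + Σ_{k=n}^{∞} μ(k)/(k+1)`, in `[0,∞]`. -/
noncomputable def discreteCalderon (μ : ℕ → ℝ≥0) (n : ℕ) : ℝ≥0∞ :=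
  ((n : ℝ≥0∞) + 1)⁻¹ * ∑ k ∈ Finset.range (n + 1), (μ k : ℝ≥0∞) +
    ∑' k : ℕ, if n ≤ k then (μ k : ℝ≥0∞) / ((k : ℝ≥0∞) + 1) else 0

/-! Every term of `S_d μ (n)` is dominated by four times a term of `Σ_m μ(m)/(2m+2n+1)` with the same
index `k`: for `k ≤ n` because `2k+2n+1 ≤ 4(n+1)`, and for `k ≥ n` because `2k+2n+1 ≤ 4(k+1)`. So
the Calderón operator is at most eight times that sum, which in turn is the part of the Hilbert-type
sum at `-2n` indexed by the odd integers `m = 2k+1`. -/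

theorem ENNReal.div_le_mul_div_of_le_mul {a b c d : ℝ≥0∞} (hd0 : d ≠ 0) (hd : d ≠ ⊤)
    (h : c ≤ d * b) : a / b ≤ d * (a / c) :=
  calc a / b = d * (a / (d * b)) := by
        rw [ENNReal.div_eq_inv_mul, ENNReal.div_eq_inv_mul,
          ENNReal.mul_inv (Or.inl hd0) (Or.inl hd), ← mul_assoc, ← mul_assoc,
          ENNReal.mul_inv_cancel hd0 hd, one_mul]
    _ ≤ d * (a / c) := by gcongr

section

variable (μ : ℕ → ℝ≥0) (n : ℕ)

lemma div_succ_le_four_mul_div {N k : ℕ} (h : 2 * k + 2 * n + 1 ≤ 4 * (N + 1)) :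
    (μ k : ℝ≥0∞) / ((N : ℝ≥0∞) + 1) ≤
      4 * ((μ k : ℝ≥0∞) / ((2 * k + 2 * n + 1 : ℕ) : ℝ≥0∞)) :=
  ENNReal.div_le_mul_div_of_le_mul (by norm_num) (by norm_num) (by exact_mod_cast h)

lemma average_le_four_mul_tsum :
    ((n : ℝ≥0∞) + 1)⁻¹ * ∑ k ∈ Finset.range (n + 1), (μ k : ℝ≥0∞) ≤
      4 * ∑' m : ℕ, (μ m : ℝ≥0∞) / ((2 * m + 2 * n + 1 : ℕ) : ℝ≥0∞) := by
  rw [Finset.mul_sum, ← ENNReal.tsum_mul_left]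
  refine le_trans (Finset.sum_le_sum fun k hk => ?_) (ENNReal.sum_le_tsum _)
  rw [← ENNReal.div_eq_inv_mul]
  exact div_succ_le_four_mul_div μ n (by grind)

lemma tail_le_four_mul_tsum :
    (∑' k : ℕ, if n ≤ k then (μ k : ℝ≥0∞) / ((k : ℝ≥0∞) + 1) else 0) ≤
      4 * ∑' m : ℕ, (μ m : ℝ≥0∞) / ((2 * m + 2 * n + 1 : ℕ) : ℝ≥0∞) := by
  rw [← ENNReal.tsum_mul_left]
  refine ENNReal.tsum_le_tsum fun k => ?_
  split_ifs with h
  · exact div_succ_le_four_mul_div μ n (by omega)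
  · exact zero_le

theorem discreteCalderon_le_eight_mul_tsum :
    discreteCalderon μ n ≤
      8 * ∑' m : ℕ, (μ m : ℝ≥0∞) / ((2 * m + 2 * n + 1 : ℕ) : ℝ≥0∞) := by
  rw [show (8 : ℝ≥0∞) = 4 + 4 by norm_num, add_mul]
  exact add_le_add (average_le_four_mul_tsum μ n) (tail_le_four_mul_tsum μ n)

lemma oddSupported_two_mul_add_one (k : ℕ) : oddSupported μ (2 * k + 1) = μ k := by
  rw [oddSupported, if_pos ⟨odd_two_mul_add_one _, by positivity⟩]
  norm_num

theorem tsum_le_hilbert_tsum :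
    ∑' m : ℕ, (μ m : ℝ≥0∞) / ((2 * m + 2 * n + 1 : ℕ) : ℝ≥0∞) ≤
      ∑' m : ℤ, (if Odd (m + 2 * (n : ℤ)) then
        (oddSupported μ m : ℝ≥0∞) / ENNReal.ofReal ((m : ℝ) + 2 * n) else 0) := by
  have hinj : Function.Injective (fun k : ℕ => (2 * k + 1 : ℤ)) := fun a b h => by simpa using h
  refine (tsum_congr fun k => ?_).le.trans (ENNReal.tsum_comp_le_tsum_of_injective hinj _)
  have hodd : Odd ((2 * k + 1 : ℤ) + 2 * (n : ℤ)) := ⟨k + n, by ring⟩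
  simp only [if_pos hodd, oddSupported_two_mul_add_one]
  rw [← ENNReal.ofReal_natCast]
  push_cast
  ring_nf

end

theorem discreteHilbert_ge_discreteCalderon_general (μ : ℕ → ℝ≥0) (n : ℕ) :
    ((ENNReal.ofReal π)⁻¹ *
        ∑' m : ℕ, (μ m : ℝ≥0∞) / ((2 * m + 2 * n + 1 : ℕ) : ℝ≥0∞) ≥
      (8 * ENNReal.ofReal π)⁻¹ * discreteCalderon μ n) ∧
    ((ENNReal.ofReal π)⁻¹ *
        ∑' m : ℤ, (if Odd (m + 2 * (n : ℤ)) then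
          (oddSupported μ m : ℝ≥0∞) / ENNReal.ofReal ((m : ℝ) + 2 * n) else 0) ≥
      (8 * ENNReal.ofReal π)⁻¹ * discreteCalderon μ n) := by
  set A := ∑' m : ℕ, (μ m : ℝ≥0∞) / ((2 * m + 2 * n + 1 : ℕ) : ℝ≥0∞)
  have key : (8 * ENNReal.ofReal π)⁻¹ * discreteCalderon μ n ≤ (ENNReal.ofReal π)⁻¹ * A :=
    calc (8 * ENNReal.ofReal π)⁻¹ * discreteCalderon μ n
        ≤ (8 * ENNReal.ofReal π)⁻¹ * (8 * A) := by
          gcongr; exact discreteCalderon_le_eight_mul_tsum μ n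
      _ = (ENNReal.ofReal π)⁻¹ * A := by
          rw [ENNReal.mul_inv (Or.inl (by norm_num)) (Or.inl (by norm_num)), mul_mul_mul_comm,
            ENNReal.inv_mul_cancel (by norm_num) (by norm_num), one_mul]
  exact ⟨key, key.trans (by gcongr; exact tsum_le_hilbert_tsum μ n)⟩

/-- For a nonincreasing `μ : ℕ → [0,∞)` one has
`(1/π) Σ_{m ≥ 0} μ(m)/(2m+2n+1) ≥ (1/(8π)) (S_d μ)(n)` in `[0,∞]`; consequently, for
`x` supported on the positive odd integers with `x(2k+1) = μ(k)`, the discrete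
Hilbert-type transform satisfies `(𝓗_d x)(-2n) ≥ (1/(8π)) (S_d μ)(n)` for all `n ≥ 0`. -/
theorem discreteHilbert_ge_discreteCalderon (μ : ℕ → ℝ≥0) (hμ : Antitone μ) (n : ℕ) :
    ((ENNReal.ofReal π)⁻¹ *
        ∑' m : ℕ, (μ m : ℝ≥0∞) / ((2 * m + 2 * n + 1 : ℕ) : ℝ≥0∞) ≥
      (8 * ENNReal.ofReal π)⁻¹ * discreteCalderon μ n) ∧
    ((ENNReal.ofReal π)⁻¹ *
        ∑' m : ℤ, (if Odd (m + 2 * (n : ℤ)) then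
          (oddSupported μ m : ℝ≥0∞) / ENNReal.ofReal ((m : ℝ) + 2 * n) else 0) ≥
      (8 * ENNReal.ofReal π)⁻¹ * discreteCalderon μ n) :=
  discreteHilbert_ge_discreteCalderon_general μ n
end
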